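/- arXiv:1512.00699 — 2 statements merged into one kernel-verified Lean document; each statement's English description precedes it below -/
import Mathlib

section
/- Let T > 0 and C₁, C₂ ≥ 0. Let w, r, k, h : ℝ × [0,T] → ℝ be functions, 2π-periodic in the first variable, with: w continuous and everywhere positive, continuously differentiable in t, satisfying ∂w/∂t = (−r − k²)·w; r continuous with |r| ≤ C₂; k continuous with 0 ≤ k ≤ h; and h continuous, nonnegative, continuously differentiable in t, twice continuously differentiable in x, satisfying the differential inequality ∂h/∂t (x,t) ≤ (1/w)·∂/∂x((1/w)·∂h/∂x)(x,t) + k(x,t)³ + C₁·(h(x,t) + 1). Then the functions Θ(t) = ∫₀^{2π} h(x,t)·w(x,t) dx and L(t) = ∫₀^{2π} w(x,t) dx satisfy Θ'(t) ≤ (C₁ + C₂)·Θ(t) + C₁·L(t) for all t ∈ [0,T]. -/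
/-!
Differentiating under the integral sign, `Θ' = ∫ (∂ₜh·w + h·∂ₜw) dx`. Multiplying (19.8) by
`w > 0` and inserting `∂ₜw = (−r − k²)w`, the integrand is at most
`∂ₓ(w⁻¹∂ₓh) + (C₁ + C₂)hw + C₁w`, because `k³ ≤ hk²` and `−r ≤ C₂`; the divergence term
`∂ₓ(w⁻¹∂ₓh)` integrates to zero over a period. Differentiation under the integral on the closed
time interval is reduced, via the fundamental theorem of calculus in `t` and Fubini, to
differentiating a primitive of a continuous function.
-/

open Set Real MeasureTheory
open scoped Interval

theorem Function.Periodic.deriv {E : Type*} [NormedAddCommGroup E] [NormedSpace ℝ E]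
    {f : ℝ → E} {c : ℝ} (hf : Function.Periodic f c) : Function.Periodic (deriv f) c := by
  intro x
  rw [← deriv_comp_add_const, show (fun y => f (y + c)) = f from funext hf]

theorem Function.Periodic.intervalIntegral_eq_zero_of_hasDerivAt {E : Type*}
    [NormedAddCommGroup E] [NormedSpace ℝ E] [CompleteSpace E] {g g' : ℝ → E} {a c : ℝ}
    (hg : Function.Periodic g c) (hderiv : ∀ x ∈ uIcc a (a + c), HasDerivAt g (g' x) x)
    (hint : IntervalIntegrable g' volume a (a + c)) :
    ∫ x in a..a + c, g' x = 0 := by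
  rw [intervalIntegral.integral_eq_sub_of_hasDerivAt hderiv hint, hg a, sub_self]

theorem intervalIntegral_integral_swap_of_continuous {E : Type*} [NormedAddCommGroup E]
    [NormedSpace ℝ E] {f : ℝ → ℝ → E} (hf : Continuous (Function.uncurry f)) (a b c d : ℝ) :
    ∫ x in a..b, ∫ y in c..d, f x y = ∫ y in c..d, ∫ x in a..b, f x y := by
  have hint : Integrable (Function.uncurry f)
      ((volume.restrict (Ι a b)).prod (volume.restrict (Ι c d))) := by
    rw [Measure.prod_restrict, ← Measure.volume_eq_prod]
    exact (hf.continuousOn.integrableOn_compact (isCompact_uIcc.prod isCompact_uIcc)).mono_set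
      (prod_mono uIoc_subset_uIcc uIoc_subset_uIcc)
  simp only [intervalIntegral.intervalIntegral_eq_integral_uIoc, integral_smul]
  rw [integral_integral_swap hint, smul_comm]

theorem hasDerivWithinAt_intervalIntegral_of_continuousOn {E : Type*} [NormedAddCommGroup E]
    [NormedSpace ℝ E] [CompleteSpace E] {f f' : ℝ → ℝ → E} {a b T₀ T₁ t : ℝ}
    (hf : ∀ x, ∀ s ∈ Icc T₀ T₁, HasDerivWithinAt (f x) (f' x s) (Icc T₀ T₁) s)
    (hf' : ContinuousOn (fun p : ℝ × ℝ => f' p.1 p.2) (univ ×ˢ Icc T₀ T₁))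
    (hf₀ : IntervalIntegrable (fun x => f x T₀) volume a b) (ht : t ∈ Icc T₀ T₁) :
    HasDerivWithinAt (fun s => ∫ x in a..b, f x s) (∫ x in a..b, f' x t) (Icc T₀ T₁) t := by
  have hT : T₀ ≤ T₁ := ht.1.trans ht.2
  -- `g` extends `f'` from `ℝ × [T₀, T₁]` to a continuous function on the whole plane.
  set g : ℝ → ℝ → E := fun x s => f' x (projIcc T₀ T₁ hT s)
  have hg : Continuous (Function.uncurry g) :=
    hf'.comp_continuous (f := fun p : ℝ × ℝ => (p.1, (projIcc T₀ T₁ hT p.2 : ℝ)))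
      (continuous_fst.prodMk
        (continuous_subtype_val.comp (continuous_projIcc.comp continuous_snd)))
      fun p => ⟨trivial, (projIcc T₀ T₁ hT p.2).2⟩
  have hg_eq : ∀ x, ∀ s ∈ Icc T₀ T₁, g x s = f' x s := fun x s hs => by
    simp only [g, projIcc_of_mem hT hs]
  have hftc : ∀ x, ∀ s ∈ Icc T₀ T₁, f x s = f x T₀ + ∫ u in T₀..s, g x u := by
    intro x s hs
    have hsub : Icc T₀ s ⊆ Icc T₀ T₁ := Icc_subset_Icc_right hs.2
    have hgx : Continuous (g x) := hg.comp (continuous_const.prodMk continuous_id)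
    rw [intervalIntegral.integral_eq_sub_of_hasDerivAt_of_le hs.1
      (fun u hu => (hf x u (hsub hu)).continuousWithinAt.mono hsub) (fun u hu => ?_)
      (hgx.intervalIntegrable _ _)]
    · abel
    rw [hg_eq x u ⟨hu.1.le, hu.2.le.trans hs.2⟩]
    exact (hf x u ⟨hu.1.le, hu.2.le.trans hs.2⟩).hasDerivAt
      (Icc_mem_nhds hu.1 (hu.2.trans_le hs.2))
  have hrepr : ∀ s ∈ Icc T₀ T₁,
      ∫ x in a..b, f x s = (∫ x in a..b, f x T₀) + ∫ u in T₀..s, ∫ x in a..b, g x u := by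
    intro s hs
    have hint : Continuous fun x => ∫ u in T₀..s, g x u :=
      intervalIntegral.continuous_parametric_intervalIntegral_of_continuous' hg T₀ s
    rw [← intervalIntegral_integral_swap_of_continuous hg,
      ← intervalIntegral.integral_add hf₀ (hint.intervalIntegrable _ _)]
    exact intervalIntegral.integral_congr fun x _ => hftc x s hs
  have hF : Continuous fun u => ∫ x in a..b, g x u :=
    intervalIntegral.continuous_parametric_intervalIntegral_of_continuous'
      (f := fun u x => g x u) (hg.comp continuous_swap) a b
  rw [← intervalIntegral.integral_congr fun x _ => hg_eq x t ht]
  exact ((hF.integral_hasStrictDerivAt T₀ t).hasDerivAt.const_add _).hasDerivWithinAt.congr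
    hrepr (hrepr t ht)

theorem curvature_integrand_le {w r k h ht hxx C₁ C₂ : ℝ} (hw : 0 < w) (hr : |r| ≤ C₂)
    (hk : 0 ≤ k) (hkh : k ≤ h) (hineq : ht ≤ 1 / w * hxx + k ^ 3 + C₁ * (h + 1)) :
    ht * w + h * ((-r - k ^ 2) * w) ≤ hxx + (C₁ + C₂) * (h * w) + C₁ * w := by
  have hht : ht * w ≤ hxx + (k ^ 3 + C₁ * (h + 1)) * w :=
    calc ht * w ≤ (1 / w * hxx + k ^ 3 + C₁ * (h + 1)) * w :=
          mul_le_mul_of_nonneg_right hineq hw.le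
      _ = hxx + (k ^ 3 + C₁ * (h + 1)) * w := by field_simp; ring
  have hcubic : k ^ 3 * w ≤ h * k ^ 2 * w := by
    have : k ^ 3 ≤ h * k ^ 2 := by
      rw [pow_succ']
      exact mul_le_mul_of_nonneg_right hkh (sq_nonneg k)
    exact mul_le_mul_of_nonneg_right this hw.le
  have hricci : -r * (h * w) ≤ C₂ * (h * w) :=
    mul_le_mul_of_nonneg_right ((neg_le_abs r).trans hr) (mul_nonneg (hk.trans hkh) hw.le)
  linarith

theorem total_curvature_evolution_inequality_general (T C₁ C₂ : ℝ)
    (w r k h wt ht hx hxx : ℝ → ℝ → ℝ)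
    (hw_per : ∀ x t, w (x + 2 * π) t = w x t)
    (hh_per : ∀ x t, h (x + 2 * π) t = h x t)
    (hw_cont : ContinuousOn (fun p : ℝ × ℝ => w p.1 p.2) (univ ×ˢ Icc 0 T))
    (hw_pos : ∀ x, ∀ t ∈ Icc (0:ℝ) T, 0 < w x t)
    (hwt : ∀ x, ∀ t ∈ Icc (0:ℝ) T, HasDerivWithinAt (w x) (wt x t) (Icc 0 T) t)
    (hwt_cont : ContinuousOn (fun p : ℝ × ℝ => wt p.1 p.2) (univ ×ˢ Icc 0 T))
    (hwevol : ∀ x, ∀ t ∈ Icc (0:ℝ) T, wt x t = (-(r x t) - (k x t) ^ 2) * w x t)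
    (hrbound : ∀ x, ∀ t ∈ Icc (0:ℝ) T, |r x t| ≤ C₂)
    (hk_nonneg : ∀ x, ∀ t ∈ Icc (0:ℝ) T, 0 ≤ k x t)
    (hkh : ∀ x, ∀ t ∈ Icc (0:ℝ) T, k x t ≤ h x t)
    (hh_cont : ContinuousOn (fun p : ℝ × ℝ => h p.1 p.2) (univ ×ˢ Icc 0 T))
    (hht : ∀ x, ∀ t ∈ Icc (0:ℝ) T, HasDerivWithinAt (h x) (ht x t) (Icc 0 T) t)
    (hht_cont : ContinuousOn (fun p : ℝ × ℝ => ht p.1 p.2) (univ ×ˢ Icc 0 T))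
    (hhx : ∀ t ∈ Icc (0:ℝ) T, ∀ x, HasDerivAt (fun x => h x t) (hx x t) x)
    (hhxx : ∀ t ∈ Icc (0:ℝ) T, ∀ x,
      HasDerivAt (fun x => (1 / w x t) * hx x t) (hxx x t) x)
    (hhxx_cont : ContinuousOn (fun p : ℝ × ℝ => hxx p.1 p.2) (univ ×ˢ Icc 0 T))
    (hineq : ∀ x, ∀ t ∈ Icc (0:ℝ) T,
      ht x t ≤ (1 / w x t) * hxx x t + (k x t) ^ 3 + C₁ * (h x t + 1)) :
    ∀ t ∈ Icc (0:ℝ) T, ∃ Θ't : ℝ,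
      HasDerivWithinAt (fun t => ∫ x in (0:ℝ)..(2 * π), h x t * w x t) Θ't (Icc 0 T) t ∧
      Θ't ≤ (C₁ + C₂) * (∫ x in (0:ℝ)..(2 * π), h x t * w x t) +
        C₁ * ∫ x in (0:ℝ)..(2 * π), w x t := by
  intro t ht₀
  have h0 : (0 : ℝ) ∈ Icc 0 T := ⟨le_rfl, ht₀.1.trans ht₀.2⟩
  have slice : ∀ {f : ℝ → ℝ → ℝ}, ContinuousOn (Function.uncurry f) (univ ×ˢ Icc 0 T) →
      ∀ s ∈ Icc 0 T, Continuous fun x => f x s :=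
    fun hf s hs => continuousOn_univ.1 (hf.uncurry_right s hs)
  have hw_t := slice hw_cont t ht₀
  have hh_t := slice hh_cont t ht₀
  have hxx_t := slice hhxx_cont t ht₀
  have hht_t := slice hht_cont t ht₀
  have hwt_t := slice hwt_cont t ht₀
  refine ⟨_, hasDerivWithinAt_intervalIntegral_of_continuousOn
    (fun x s hs => (hht x s hs).mul (hwt x s hs))
    ((hht_cont.mul hw_cont).add (hh_cont.mul hwt_cont))
    (((slice hh_cont 0 h0).mul (slice hw_cont 0 h0)).intervalIntegrable _ _) ht₀, ?_⟩
  have hx_per : ∀ x, hx (x + 2 * π) t = hx x t := fun x => by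
    rw [← (hhx t ht₀ _).deriv, ← (hhx t ht₀ x).deriv]
    exact Function.Periodic.deriv (fun x => hh_per x t) x
  have hflux : ∫ x in (0:ℝ)..(2 * π), hxx x t = 0 := by
    simpa using Function.Periodic.intervalIntegral_eq_zero_of_hasDerivAt (a := 0)
      (fun x => by simp only [hw_per, hx_per]) (fun x _ => hhxx t ht₀ x)
      (hxx_t.intervalIntegrable _ _)
  calc _ ≤ ∫ x in (0:ℝ)..(2 * π), hxx x t + (C₁ + C₂) * (h x t * w x t) + C₁ * w x t := by
        refine intervalIntegral.integral_mono_on two_pi_pos.le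
          (Continuous.intervalIntegrable (by fun_prop) _ _)
          (Continuous.intervalIntegrable (by fun_prop) _ _) fun x _ => ?_
        rw [hwevol x t ht₀]
        exact curvature_integrand_le (hw_pos x t ht₀) (hrbound x t ht₀) (hk_nonneg x t ht₀)
          (hkh x t ht₀) (hineq x t ht₀)
    _ = _ := by
        rw [intervalIntegral.integral_add, intervalIntegral.integral_add, hflux,
          intervalIntegral.integral_const_mul, intervalIntegral.integral_const_mul, zero_add]
        all_goals exact Continuous.intervalIntegrable (by fun_prop) _ _

/-- Second inequality of the corrected Lemma 19.9: with `w > 0` evolving by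
`∂w/∂t = (−r − k²)·w`, `|r| ≤ C₂`, `0 ≤ k ≤ h`, and `h` satisfying the corrected
inequality (19.8) `∂h/∂t ≤ (1/w)·∂/∂x((1/w)·∂h/∂x) + k³ + C₁(h+1)` (the right-hand
side being `h'' + k³ + C₁(h+1)` in arc-length derivatives), the ε-modified total
curvature `Θ(t) = ∫₀^{2π} h·w dx` and length `L(t) = ∫₀^{2π} w dx` satisfy
`Θ'(t) ≤ (C₁+C₂)·Θ(t) + C₁·L(t)`. -/
theorem total_curvature_evolution_inequality (T C₁ C₂ : ℝ) (hT : 0 < T)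
    (hC₁ : 0 ≤ C₁) (hC₂ : 0 ≤ C₂)
    (w r k h wt ht hx hxx : ℝ → ℝ → ℝ)
    (hw_per : ∀ x t, w (x + 2 * π) t = w x t)
    (hr_per : ∀ x t, r (x + 2 * π) t = r x t)
    (hk_per : ∀ x t, k (x + 2 * π) t = k x t)
    (hh_per : ∀ x t, h (x + 2 * π) t = h x t)
    (hw_cont : ContinuousOn (fun p : ℝ × ℝ => w p.1 p.2) (univ ×ˢ Icc 0 T))
    (hw_pos : ∀ x, ∀ t ∈ Icc (0:ℝ) T, 0 < w x t)
    (hwt : ∀ x, ∀ t ∈ Icc (0:ℝ) T, HasDerivWithinAt (w x) (wt x t) (Icc 0 T) t)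
    (hwt_cont : ContinuousOn (fun p : ℝ × ℝ => wt p.1 p.2) (univ ×ˢ Icc 0 T))
    (hwevol : ∀ x, ∀ t ∈ Icc (0:ℝ) T, wt x t = (-(r x t) - (k x t) ^ 2) * w x t)
    (hr_cont : ContinuousOn (fun p : ℝ × ℝ => r p.1 p.2) (univ ×ˢ Icc 0 T))
    (hrbound : ∀ x, ∀ t ∈ Icc (0:ℝ) T, |r x t| ≤ C₂)
    (hk_cont : ContinuousOn (fun p : ℝ × ℝ => k p.1 p.2) (univ ×ˢ Icc 0 T))
    (hk_nonneg : ∀ x, ∀ t ∈ Icc (0:ℝ) T, 0 ≤ k x t)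
    (hkh : ∀ x, ∀ t ∈ Icc (0:ℝ) T, k x t ≤ h x t)
    (hh_cont : ContinuousOn (fun p : ℝ × ℝ => h p.1 p.2) (univ ×ˢ Icc 0 T))
    (hh_nonneg : ∀ x, ∀ t ∈ Icc (0:ℝ) T, 0 ≤ h x t)
    (hht : ∀ x, ∀ t ∈ Icc (0:ℝ) T, HasDerivWithinAt (h x) (ht x t) (Icc 0 T) t)
    (hht_cont : ContinuousOn (fun p : ℝ × ℝ => ht p.1 p.2) (univ ×ˢ Icc 0 T))
    (hhx : ∀ t ∈ Icc (0:ℝ) T, ∀ x, HasDerivAt (fun x => h x t) (hx x t) x)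
    (hhxx : ∀ t ∈ Icc (0:ℝ) T, ∀ x,
      HasDerivAt (fun x => (1 / w x t) * hx x t) (hxx x t) x)
    (hhx_cont : ContinuousOn (fun p : ℝ × ℝ => hx p.1 p.2) (univ ×ˢ Icc 0 T))
    (hhxx_cont : ContinuousOn (fun p : ℝ × ℝ => hxx p.1 p.2) (univ ×ˢ Icc 0 T))
    (hineq : ∀ x, ∀ t ∈ Icc (0:ℝ) T,
      ht x t ≤ (1 / w x t) * hxx x t + (k x t) ^ 3 + C₁ * (h x t + 1)) :
    ∀ t ∈ Icc (0:ℝ) T, ∃ Θ't : ℝ,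
      HasDerivWithinAt (fun t => ∫ x in (0:ℝ)..(2 * π), h x t * w x t) Θ't (Icc 0 T) t ∧
      Θ't ≤ (C₁ + C₂) * (∫ x in (0:ℝ)..(2 * π), h x t * w x t) +
        C₁ * ∫ x in (0:ℝ)..(2 * π), w x t :=
  total_curvature_evolution_inequality_general T C₁ C₂ w r k h wt ht hx hxx hw_per hh_per hw_cont
    hw_pos hwt hwt_cont hwevol hrbound hk_nonneg hkh hh_cont hht hht_cont hhx hhxx hhxx_cont hineq
end

section
/- Let t₀ < t₁, C' ≥ 0, and let f : ℝ × [t₀,t₁] → ℝ be a function that is 2π-periodic in the first variable, continuous on ℝ × [t₀,t₁], continuously differentiable in t, twice continuously differentiable in x, and let b : ℝ × [t₀,t₁] → ℝ be continuous. Suppose that f satisfies the parabolic differential inequality ∂f/∂t (x,t) ≤ ∂²f/∂x² (x,t) + b(x,t)·∂f/∂x (x,t) + C'·(f(x,t) + 1) for all (x,t). Then for all t ∈ [t₀,t₁], max_{x} f(x,t) + 1 ≤ (max_{x} f(x,t₀) + 1)·exp(C'·(t − t₀)). -/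
/-!
Compare `f` with the spatially constant barrier
`φ(s) = A e^{C'(s-t₀)} + ε e^{(C'+1)(s-t₀)} - 1`, `A = max f(·,t₀) + 1`, which satisfies
`φ' = C'(φ + 1) + ε e^{(C'+1)(s-t₀)} > C'(φ + 1)`. If `f` ever reached `φ`, then at the first
such time `s` and at a point `x` where `f(·,s)` is maximal we would have `∂ₜf ≥ φ'`,
`∂ₓf = 0` and `∂ₓ²f ≤ 0`, so the differential inequality would give `∂ₜf ≤ C'(φ + 1) < φ'`.
Hence `f < φ` throughout, and letting `ε → 0` gives the bound.
-/

open Set Real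
open Filter Topology Function

theorem IsLocalMax.hasDerivAt_deriv_nonpos {g g' : ℝ → ℝ} {a c : ℝ} (hmax : IsLocalMax g a)
    (hg : ∀ᶠ x in 𝓝 a, HasDerivAt g (g' x) x) (hg' : HasDerivAt g' c a) : c ≤ 0 := by
  by_contra! hc
  have hzero : g' a = 0 := hmax.hasDerivAt_eq_zero hg.self_of_nhds
  have hpos : ∀ᶠ x in 𝓝[>] a, 0 < g' x := by
    filter_upwards [((hasDerivAt_iff_tendsto_slope.1 hg').mono_left (nhdsGT_le_nhdsNE a)).eventually
      (eventually_gt_nhds hc), self_mem_nhdsWithin] with x hslope hx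
    exact pos_of_slope_pos hx hslope hzero
  obtain ⟨u, hau, hu⟩ := mem_nhdsGT_iff_exists_Ioo_subset.1
    (hpos.and (nhdsWithin_le_nhds (hg.and hmax)))
  have hmono : StrictMonoOn g (Ico a u) := by
    refine strictMonoOn_of_deriv_pos (convex_Ico a u) (fun x hx => ?_) fun x hx => ?_
    · rcases hx.1.eq_or_lt with rfl | hax
      · exact hg.self_of_nhds.continuousAt.continuousWithinAt
      · exact (hu ⟨hax, hx.2⟩).2.1.continuousAt.continuousWithinAt
    · rw [interior_Ico] at hx
      rw [(hu hx).2.1.deriv]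
      exact (hu hx).1
  have hmid : (a + u) / 2 ∈ Ioo a u := ⟨by linarith [mem_Ioi.1 hau], by linarith [mem_Ioi.1 hau]⟩
  exact (hu hmid).2.2.not_gt
    (hmono (left_mem_Ico.2 hau) (Ioo_subset_Ico_self hmid) hmid.1)

theorem IsMaxOn.hasDerivWithinAt_Icc_right_nonneg {g : ℝ → ℝ} {a b g' : ℝ} (hab : a < b)
    (hmax : IsMaxOn g (Icc a b) b) (hg : HasDerivWithinAt g g' (Icc a b) b) : 0 ≤ g' := by
  have hcone : a - b ∈ posTangentConeAt (Icc a b) b :=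
    sub_mem_posTangentConeAt_of_segment_subset (by rw [segment_symm, segment_eq_Icc hab.le])
  have := hmax.localize.hasFDerivWithinAt_nonpos hg hcone
  rw [ContinuousLinearMap.toSpanSingleton_apply, smul_eq_mul] at this
  exact nonneg_of_mul_nonpos_right this (sub_neg.2 hab)

theorem Function.Periodic.isMaxOn_univ {α β : Type*} [AddCommGroup α] [LinearOrder α]
    [IsOrderedAddMonoid α] [Archimedean α] [Preorder β] {g : α → β} {p x : α}
    (hg : Periodic g p) (hp : 0 < p) (hx : IsMaxOn g (Icc 0 p) x) : IsMaxOn g univ x := by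
  rintro y -
  obtain ⟨z, hz, hzy⟩ : g y ∈ g '' Icc 0 (0 + p) := hg.image_Icc hp 0 ▸ mem_range_self y
  rw [zero_add] at hz
  show g y ≤ g x
  exact hzy ▸ hx hz

theorem exists_first_touching_time {X : Type*} [TopologicalSpace X] {K : Set X}
    (hK : IsCompact K) {f : X → ℝ → ℝ} {φ : ℝ → ℝ} {t₀ t₁ : ℝ}
    (hf : ContinuousOn (fun q : X × ℝ => f q.1 q.2) (K ×ˢ Icc t₀ t₁)) (hφ : Continuous φ)
    (hinit : ∀ x ∈ K, f x t₀ < φ t₀) (htouch : ∃ x ∈ K, ∃ t ∈ Icc t₀ t₁, φ t ≤ f x t) :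
    ∃ s ∈ Ioc t₀ t₁, ∃ x ∈ K, f x s = φ s ∧ (∀ y ∈ K, f y s ≤ φ s) ∧
      ∀ r ∈ Ico t₀ s, ∀ y ∈ K, f y r < φ r := by
  have hgap : ContinuousOn (fun q : X × ℝ => f q.1 q.2 - φ q.2) (K ×ˢ Icc t₀ t₁) :=
    hf.sub (hφ.comp continuous_snd).continuousOn
  set T := K ×ˢ Icc t₀ t₁ ∩ (fun q : X × ℝ => f q.1 q.2 - φ q.2) ⁻¹' Ici 0
  have hT : IsCompact T :=
    hgap.upperSemicontinuousOn.isCompact_inter_preimage_Ici (hK.prod isCompact_Icc) 0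
  obtain ⟨x, hx, t, ht, hφt⟩ := htouch
  obtain ⟨⟨x, s⟩, ⟨⟨hx, hs⟩, hxs⟩, hmin⟩ :=
    hT.exists_isMinOn ⟨(x, t), ⟨⟨hx, ht⟩, sub_nonneg.2 hφt⟩⟩ continuous_snd.continuousOn
  have hxs : φ s ≤ f x s := sub_nonneg.1 hxs
  have hbefore : ∀ r ∈ Ico t₀ s, ∀ y ∈ K, f y r < φ r := fun r hr y hy => by
    by_contra! hyr
    exact hr.2.not_ge (isMinOn_iff.1 hmin (y, r) ⟨⟨hy, hr.1, hr.2.le.trans hs.2⟩, sub_nonneg.2 hyr⟩)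
  have hs₀ : t₀ < s := hs.1.lt_of_ne fun h => (hinit x hx).not_ge (h ▸ hxs)
  have hat : ∀ y ∈ K, f y s ≤ φ s := fun y hy => by
    refine ContinuousWithinAt.closure_le (s := Ico t₀ s) ?_ ?_ hφ.continuousWithinAt
      fun r hr => (hbefore r hr y hy).le
    · rw [closure_Ico hs₀.ne]
      exact right_mem_Icc.2 hs₀.le
    · exact (hf (y, s) ⟨hy, hs⟩).comp (continuous_const.prodMk continuous_id).continuousWithinAt
        fun r hr => ⟨hy, hr.1, hr.2.le.trans hs.2⟩
  exact ⟨s, ⟨hs₀, hs.2⟩, x, hx, (hat x hx).antisymm hxs, hat, hbefore⟩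

theorem periodic_parabolic_lt_of_strict_supersolution {t₀ t₁ p : ℝ} (hp : 0 < p)
    {f b ft fx fxx : ℝ → ℝ → ℝ} {R φ φ' : ℝ → ℝ}
    (hf_per : ∀ t, Periodic (fun x => f x t) p)
    (hf_cont : ContinuousOn (fun q : ℝ × ℝ => f q.1 q.2) (univ ×ˢ Icc t₀ t₁))
    (hft : ∀ x, ∀ t ∈ Icc t₀ t₁, HasDerivWithinAt (f x) (ft x t) (Icc t₀ t₁) t)
    (hfx : ∀ t ∈ Icc t₀ t₁, ∀ x, HasDerivAt (fun x => f x t) (fx x t) x)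
    (hfxx : ∀ t ∈ Icc t₀ t₁, ∀ x, HasDerivAt (fun x => fx x t) (fxx x t) x)
    (hineq : ∀ x, ∀ t ∈ Icc t₀ t₁, ft x t ≤ fxx x t + b x t * fx x t + R (f x t))
    (hφ : ∀ t, HasDerivAt φ (φ' t) t) (hφ_super : ∀ t, R (φ t) < φ' t)
    (hinit : ∀ x, f x t₀ < φ t₀) :
    ∀ t ∈ Icc t₀ t₁, ∀ x, f x t < φ t := by
  by_contra! ⟨t, ht, x, hx⟩
  obtain ⟨y, hy, hyx⟩ := (hf_per t).exists_mem_Ico₀ hp x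
  obtain ⟨s, hs, xs, hxs, heq, hmaxK, hbefore⟩ := exists_first_touching_time isCompact_Icc
    (hf_cont.mono (prod_mono (subset_univ _) subset_rfl))
    (Differentiable.continuous fun t => (hφ t).differentiableAt) (fun x _ => hinit x)
    ⟨y, Ico_subset_Icc_self hy, t, ht, hyx ▸ hx⟩
  have hsI : s ∈ Icc t₀ t₁ := Ioc_subset_Icc_self hs
  have hmax : IsMaxOn (fun y => f y s) univ xs :=
    (hf_per s).isMaxOn_univ hp fun y hy => by simpa [heq] using hmaxK y hy
  have hfx_zero : fx xs s = 0 :=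
    (hmax.isLocalMax univ_mem).hasDerivAt_eq_zero (hfx s hsI xs)
  have hfxx_nonpos : fxx xs s ≤ 0 :=
    (hmax.isLocalMax univ_mem).hasDerivAt_deriv_nonpos (.of_forall (hfx s hsI)) (hfxx s hsI xs)
  have hgap_max : IsMaxOn (fun r => f xs r - φ r) (Icc t₀ s) s := by
    intro r hr
    show f xs r - φ r ≤ f xs s - φ s
    rcases hr.2.lt_or_eq with hrs | rfl
    · linarith [hbefore r ⟨hr.1, hrs⟩ xs hxs]
    · exact le_rfl
  have hft_ge : φ' s ≤ ft xs s := sub_nonneg.1 <| hgap_max.hasDerivWithinAt_Icc_right_nonneg hs.1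
    (((hft xs s hsI).sub (hφ s).hasDerivWithinAt).mono (Icc_subset_Icc_right hs.2))
  have := hineq xs s hsI
  rw [hfx_zero, heq] at this
  linarith [hφ_super s]

theorem hasDerivAt_exp_barrier (A ε c t₀ s : ℝ) :
    HasDerivAt (fun s => A * exp (c * (s - t₀)) + ε * exp ((c + 1) * (s - t₀)))
      (c * (A * exp (c * (s - t₀)) + ε * exp ((c + 1) * (s - t₀))) +
        ε * exp ((c + 1) * (s - t₀))) s := by
  have hlin : ∀ k : ℝ, HasDerivAt (fun s => k * (s - t₀)) k s := fun k => by
    simpa using ((hasDerivAt_id s).sub_const t₀).const_mul k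
  exact (((hlin c).exp.const_mul A).add ((hlin (c + 1)).exp.const_mul ε)).congr_deriv (by ring)

theorem maximum_principle_exponential_bound_general (t₀ t₁ C' : ℝ)
    (f b ft fx fxx : ℝ → ℝ → ℝ)
    (hf_per : ∀ x t, f (x + 2 * π) t = f x t)
    (hf_cont : ContinuousOn (fun p : ℝ × ℝ => f p.1 p.2) (univ ×ˢ Icc t₀ t₁))
    (hft : ∀ x, ∀ t ∈ Icc t₀ t₁, HasDerivWithinAt (f x) (ft x t) (Icc t₀ t₁) t)
    (hfx : ∀ t ∈ Icc t₀ t₁, ∀ x, HasDerivAt (fun x => f x t) (fx x t) x)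
    (hfxx : ∀ t ∈ Icc t₀ t₁, ∀ x, HasDerivAt (fun x => fx x t) (fxx x t) x)
    (hineq : ∀ x, ∀ t ∈ Icc t₀ t₁,
      ft x t ≤ fxx x t + b x t * fx x t + C' * (f x t + 1)) :
    ∀ t ∈ Icc t₀ t₁,
      (⨆ x, f x t) + 1 ≤ ((⨆ x, f x t₀) + 1) * Real.exp (C' * (t - t₀)) := by
  intro t ht
  have ht₀ : t₀ ∈ Icc t₀ t₁ := left_mem_Icc.2 (ht.1.trans ht.2)
  have hper : ∀ s, Periodic (fun x => f x s) (2 * π) := fun s x => hf_per x s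
  have hbdd : BddAbove (range fun x => f x t₀) :=
    ((hper t₀).compact_of_continuous two_pi_pos.ne'
      (Differentiable.continuous fun x => (hfx t₀ ht₀ x).differentiableAt)).bddAbove
  set A := (⨆ x, f x t₀) + 1
  set E := exp ((C' + 1) * (t - t₀))
  refine le_of_forall_pos_le_add fun δ hδ => ?_
  suffices ∀ x, f x t ≤ A * exp (C' * (t - t₀)) + δ - 1 by linarith [ciSup_le this]
  intro x
  -- with `ε = δ / E` the barrier exceeds the claimed bound by exactly `δ` at time `t`
  have hlt := periodic_parabolic_lt_of_strict_supersolution two_pi_pos hper hf_cont hft hfx hfxx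
    (R := fun y => C' * (y + 1)) hineq
    (fun s => (hasDerivAt_exp_barrier A (δ / E) C' t₀ s).sub_const 1)
    (fun s => by rw [sub_add_cancel, lt_add_iff_pos_right]; positivity)
    (fun x => by
      simp only [sub_self, mul_zero, exp_zero, mul_one]
      linarith [le_ciSup hbdd x, div_pos hδ (exp_pos ((C' + 1) * (t - t₀)))]) t ht x
  rw [div_mul_cancel₀ δ (exp_pos _).ne'] at hlt
  linarith

/-- Maximum-principle step in the corrected proof of Lemma 19.14: if `f` is `2π`-periodic
in `x`, `C¹` in `t`, `C²` in `x`, and satisfies the parabolic inequality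
`∂f/∂t ≤ ∂²f/∂x² + b·∂f/∂x + C'·(f+1)` with `b` continuous, then
`max_x f(x,t) + 1 ≤ (max_x f(x,t₀) + 1)·exp(C'·(t − t₀))` for all `t ∈ [t₀,t₁]`. -/
theorem maximum_principle_exponential_bound (t₀ t₁ C' : ℝ) (ht : t₀ < t₁) (hC' : 0 ≤ C')
    (f b ft fx fxx : ℝ → ℝ → ℝ)
    (hf_per : ∀ x t, f (x + 2 * π) t = f x t)
    (hf_cont : ContinuousOn (fun p : ℝ × ℝ => f p.1 p.2) (univ ×ˢ Icc t₀ t₁))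
    (hb_cont : ContinuousOn (fun p : ℝ × ℝ => b p.1 p.2) (univ ×ˢ Icc t₀ t₁))
    (hft : ∀ x, ∀ t ∈ Icc t₀ t₁, HasDerivWithinAt (f x) (ft x t) (Icc t₀ t₁) t)
    (hft_cont : ContinuousOn (fun p : ℝ × ℝ => ft p.1 p.2) (univ ×ˢ Icc t₀ t₁))
    (hfx : ∀ t ∈ Icc t₀ t₁, ∀ x, HasDerivAt (fun x => f x t) (fx x t) x)
    (hfxx : ∀ t ∈ Icc t₀ t₁, ∀ x, HasDerivAt (fun x => fx x t) (fxx x t) x)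
    (hfx_cont : ContinuousOn (fun p : ℝ × ℝ => fx p.1 p.2) (univ ×ˢ Icc t₀ t₁))
    (hfxx_cont : ContinuousOn (fun p : ℝ × ℝ => fxx p.1 p.2) (univ ×ˢ Icc t₀ t₁))
    (hineq : ∀ x, ∀ t ∈ Icc t₀ t₁,
      ft x t ≤ fxx x t + b x t * fx x t + C' * (f x t + 1)) :
    ∀ t ∈ Icc t₀ t₁,
      (⨆ x, f x t) + 1 ≤ ((⨆ x, f x t₀) + 1) * Real.exp (C' * (t - t₀)) :=
  maximum_principle_exponential_bound_general t₀ t₁ C' f b ft fx fxx hf_per hf_cont hft hfx hfxx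
    hineq
end
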